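/- arXiv:math/0503600 — 5 statements merged into one kernel-verified Lean document; each statement's English description precedes it below -/
import Mathlib

section
/- Let ε > 0 and let F : ℝ^d → ℝ be continuously differentiable. Let Σ ⊂ ℝ^d be a bounded, open, connected set, and let h, w, φ be C² on an open neighborhood of the closure of Σ such that: L_ε h = 0 in Σ and h > 0 in Σ; L_ε w = h in Σ, w = 0 on ∂Σ and w > 0 in Σ; and, for some λ ∈ ℝ, L_ε φ = λ·φ in Σ, φ = 0 on ∂Σ and φ > 0 in Σ. If s := sup_{x∈Σ} w(x)/h(x) is finite, then λ·s ≥ 1 (equivalently, the principal Dirichlet eigenvalue λ of L_ε on Σ satisfies λ ≥ 1/sup_Σ(w/h)). -/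
/-!
With the Gibbs density `ρ = exp (-F / ε)`, the operator `L_ε` is symmetric in `L²(ρ dx)`:
`ρ (w L_ε φ - φ L_ε w) = ε div (ρ (φ ∇w - w ∇φ))`. The flux vanishes on `∂Σ` because `w` and `φ`
do, so the divergence integrates to zero over `Σ`; this is checked coordinatewise, slicing `Σ`
into lines, each of which meets `Σ` in countably many open intervals whose endpoints lie on `∂Σ`.
Hence `λ ∫_Σ ρ w φ = ∫_Σ ρ φ h > 0`, and `w ≤ s h` gives `∫_Σ ρ w φ ≤ s ∫_Σ ρ φ h`, so `λ s ≥ 1`.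
-/

open Metric Set

noncomputable def laplacian {d : ℕ} (u : EuclideanSpace ℝ (Fin d) → ℝ)
    (x : EuclideanSpace ℝ (Fin d)) : ℝ :=
  ∑ i : Fin d, iteratedFDeriv ℝ 2 u x ![EuclideanSpace.single i 1, EuclideanSpace.single i 1]

/-- The operator `L_ε u = -ε Δu + ⟨∇F, ∇u⟩`. -/
noncomputable def Lop {d : ℕ} (ε : ℝ) (F u : EuclideanSpace ℝ (Fin d) → ℝ)
    (x : EuclideanSpace ℝ (Fin d)) : ℝ :=
  -ε * laplacian u x + inner ℝ (gradient F x) (gradient u x)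

open MeasureTheory

theorem Bornology.IsBounded.integrableOn_of_continuousOn {E F : Type*} [MetricSpace E]
    [ProperSpace E] [MeasurableSpace E] [OpensMeasurableSpace E] [NormedAddCommGroup F]
    {μ : Measure E} [IsFiniteMeasureOnCompacts μ] {S : Set E} (hS : Bornology.IsBounded S)
    {f : E → F} (hf : ContinuousOn f (closure S)) : IntegrableOn f S μ :=
  (hf.integrableOn_compact hS.isCompact_closure).mono_set subset_closure

theorem IsOpen.setIntegral_pos {E : Type*} [TopologicalSpace E] [MeasurableSpace E]
    [OpensMeasurableSpace E] {μ : Measure E} [μ.IsOpenPosMeasure] {S : Set E} (hS : IsOpen S)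
    (hne : S.Nonempty) {f : E → ℝ} (hf : IntegrableOn f S μ) (hpos : ∀ x ∈ S, 0 < f x) :
    0 < ∫ x in S, f x ∂μ := by
  rw [setIntegral_pos_iff_support_of_nonneg_ae
    ((ae_restrict_iff' hS.measurableSet).2 (ae_of_all _ fun x hx => (hpos x hx).le)) hf]
  exact (hS.measure_pos μ hne).trans_le
    (measure_mono fun x hx => ⟨(hpos x hx).ne', hx⟩)

theorem IsOpen.frontier_connectedComponentIn_subset {X : Type*} [TopologicalSpace X]
    [LocallyConnectedSpace X] {O : Set X} (hO : IsOpen O) (x : X) :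
    frontier (connectedComponentIn O x) ⊆ frontier O := by
  have hC : IsOpen (connectedComponentIn O x) := hO.connectedComponentIn
  intro y hy
  rw [hC.frontier_eq] at hy
  rw [hO.frontier_eq]
  refine ⟨closure_mono (connectedComponentIn_subset O x) hy.1, fun hyO => hy.2 ?_⟩
  obtain ⟨z, hzy, hzx⟩ := mem_closure_iff.1 hy.1 _ hO.connectedComponentIn
    (mem_connectedComponentIn hyO)
  rw [connectedComponentIn_eq hzx, ← connectedComponentIn_eq hzy]
  exact mem_connectedComponentIn hyO

theorem IsOpen.setIntegral_eq_zero_of_connectedComponentIn {X E : Type*} [TopologicalSpace X]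
    [LocallyConnectedSpace X] [TopologicalSpace.SeparableSpace X] [MeasurableSpace X]
    [OpensMeasurableSpace X] [NormedAddCommGroup E] [NormedSpace ℝ E] {μ : Measure X}
    {O : Set X} (hO : IsOpen O) {f : X → E} (hf : IntegrableOn f O μ)
    (h : ∀ x ∈ O, ∫ y in connectedComponentIn O x, f y ∂μ = 0) :
    ∫ x in O, f x ∂μ = 0 := by
  set T := connectedComponentIn O '' O
  have hdisj : T.PairwiseDisjoint id := by
    rintro _ ⟨x, -, rfl⟩ _ ⟨y, -, rfl⟩ hne
    refine Set.disjoint_left.2 fun z hzx hzy => hne ?_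
    rw [connectedComponentIn_eq hzx, connectedComponentIn_eq hzy]
  have hT : T.Countable := hdisj.countable_of_isOpen
    (by rintro _ ⟨x, -, rfl⟩; exact hO.connectedComponentIn)
    (by rintro _ ⟨x, hx, rfl⟩; exact ⟨x, mem_connectedComponentIn hx⟩)
  have : Countable T := hT.to_subtype
  have hOT : O = ⋃ C : ↥T, C.1 := by
    ext x
    simp only [mem_iUnion, Subtype.exists, exists_prop]
    refine ⟨fun hx => ⟨_, ⟨x, hx, rfl⟩, mem_connectedComponentIn hx⟩, ?_⟩
    rintro ⟨_, ⟨y, -, rfl⟩, hy⟩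
    exact connectedComponentIn_subset O y hy
  rw [hOT] at hf ⊢
  rw [integral_iUnion (ι := T) (s := Subtype.val) (fun C => ?_)
    (fun C D hCD => hdisj C.2 D.2 (Subtype.coe_ne_coe.2 hCD)) hf]
  · refine (tsum_congr ?_).trans tsum_zero
    rintro ⟨_, x, hx, rfl⟩
    exact h x hx
  · obtain ⟨_, x, -, rfl⟩ := C
    exact hO.connectedComponentIn.measurableSet

theorem IsConnected.eq_Ioo_of_isOpen_of_isBounded {s : Set ℝ} (hs : IsConnected s)
    (ho : IsOpen s) (hb : Bornology.IsBounded s) : s = Ioo (sInf s) (sSup s) := by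
  refine (hs.Ioo_csInf_csSup_subset hb.bddBelow hb.bddAbove).antisymm' ?_
  rw [← interior_Icc]
  exact ho.subset_interior_iff.2 (subset_Icc_csInf_csSup hb.bddBelow hb.bddAbove)

theorem setIntegral_eq_zero_of_hasDerivAt_of_eq_zero_on_frontier {O : Set ℝ} (hO : IsOpen O)
    (hb : Bornology.IsBounded O) {f f' : ℝ → ℝ}
    (hd : ∀ t ∈ closure O, HasDerivAt f (f' t) t) (hc : ContinuousOn f' (closure O))
    (hz : ∀ t ∈ frontier O, f t = 0) :
    ∫ t in O, f' t = 0 := by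
  refine hO.setIntegral_eq_zero_of_connectedComponentIn (hb.integrableOn_of_continuousOn hc)
    fun x hx => ?_
  set C := connectedComponentIn O x
  have hCO : C ⊆ O := connectedComponentIn_subset O x
  have hC : C = Ioo (sInf C) (sSup C) :=
    (isConnected_connectedComponentIn_iff.2 hx).eq_Ioo_of_isOpen_of_isBounded
      hO.connectedComponentIn (hb.subset hCO)
  set a := sInf C
  set b := sSup C
  have hab : a < b := by
    have hxC : x ∈ Ioo a b := hC ▸ mem_connectedComponentIn hx
    exact hxC.1.trans hxC.2
  have hends : ∀ t ∈ ({a, b} : Set ℝ), f t = 0 := fun t ht =>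
    hz t (hO.frontier_connectedComponentIn_subset x (by rwa [← frontier_Ioo hab, ← hC] at ht))
  have hIcc : Icc a b ⊆ closure O := by
    rw [← closure_Ioo hab.ne, ← hC]
    exact closure_mono hCO
  rw [hC, ← integral_Ioc_eq_integral_Ioo, ← intervalIntegral.integral_of_le hab.le,
    intervalIntegral.integral_eq_sub_of_hasDerivAt (fun t ht => hd t (hIcc (uIcc_of_le hab.le ▸ ht)))
      ((hc.mono (uIcc_of_le hab.le ▸ hIcc)).intervalIntegrable),
    hends b (by simp), hends a (by simp), sub_zero]

theorem antilipschitzWith_add_smul {E : Type*} [NormedAddCommGroup E] [NormedSpace ℝ E] (p : E)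
    {v : E} (hv : v ≠ 0) : AntilipschitzWith ‖v‖₊⁻¹ fun t : ℝ => p + t • v := by
  refine AntilipschitzWith.of_le_mul_dist fun t s => ?_
  rw [dist_add_left, dist_eq_norm (t • v), ← sub_smul, norm_smul, NNReal.coe_inv, coe_nnnorm,
    mul_comm, mul_inv_cancel_right₀ (norm_ne_zero_iff.2 hv), dist_eq_norm]

theorem setIntegral_fderiv_along_line_eq_zero {E : Type*} [NormedAddCommGroup E] [NormedSpace ℝ E]
    {S U : Set E} (hSb : Bornology.IsBounded S) (hSo : IsOpen S) (hUo : IsOpen U)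
    (hSU : closure S ⊆ U) {g : E → ℝ} (hg : ContDiffOn ℝ 1 g U)
    (hz : ∀ x ∈ frontier S, g x = 0) (p : E) {v : E} (hv : v ≠ 0) :
    ∫ t in (fun t : ℝ => p + t • v) ⁻¹' S, fderiv ℝ g (p + t • v) v = 0 := by
  set X : ℝ → E := fun t => p + t • v
  have hXc : Continuous X := by fun_prop
  have hXd : ∀ t, HasDerivAt X v t := fun t => by
    simpa only [id, one_smul] using ((hasDerivAt_id t).smul_const v).const_add p
  have hclosure : ∀ t ∈ closure (X ⁻¹' S), X t ∈ U := fun t ht =>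
    hSU (hXc.closure_preimage_subset S ht)
  refine setIntegral_eq_zero_of_hasDerivAt_of_eq_zero_on_frontier (hSo.preimage hXc)
    ((antilipschitzWith_add_smul p hv).isBounded_preimage hSb) (f := g ∘ X)
    (fun t ht => ?_) ?_ (fun t ht => hz _ (hXc.frontier_preimage_subset S ht))
  · have hgd : DifferentiableAt ℝ g (X t) :=
      (hg.differentiableOn one_ne_zero).differentiableAt (hUo.mem_nhds (hclosure t ht))
    exact hgd.hasFDerivAt.comp_hasDerivAt t (hXd t)
  · exact ((hg.continuousOn_fderiv_of_isOpen hUo le_rfl).clm_apply continuousOn_const).comp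
      hXc.continuousOn fun t ht => hclosure t ht

theorem setIntegral_fderiv_single_eq_zero {d : ℕ} {S U : Set (EuclideanSpace ℝ (Fin d))}
    (hSb : Bornology.IsBounded S) (hSo : IsOpen S) (hUo : IsOpen U) (hSU : closure S ⊆ U)
    {g : EuclideanSpace ℝ (Fin d) → ℝ} (hg : ContDiffOn ℝ 1 g U)
    (hz : ∀ x ∈ frontier S, g x = 0) (i : Fin d) :
    ∫ x in S, fderiv ℝ g x (EuclideanSpace.single i 1) = 0 := by
  obtain ⟨n, rfl⟩ : ∃ n, d = n + 1 := Nat.exists_eq_succ_of_ne_zero i.pos.ne'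
  set v : EuclideanSpace ℝ (Fin (n + 1)) := EuclideanSpace.single i 1
  set g' := fun x => fderiv ℝ g x v
  let e := (MeasurableEquiv.toLp 2 (Fin (n + 1) → ℝ)).symm.trans
    (MeasurableEquiv.piFinSuccAbove (fun _ => ℝ) i)
  have he : MeasurePreserving e volume (volume.prod volume) :=
    (EuclideanSpace.volume_preserving_symm_measurableEquiv_toLp _).trans
      (volume_preserving_piFinSuccAbove _ i)
  -- the fibres of `e` over the second factor are the lines in the direction `v`
  have he_line : ∀ t y, e.symm (t, y) = e.symm (0, y) + t • v := fun t y => by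
    ext j
    rcases eq_or_ne j i with rfl | hj
    · simp [e, v]
    · obtain ⟨k, rfl⟩ := Fin.exists_succAbove_eq hj
      simp [e, v, hj]
  have hint : Integrable (fun z => S.indicator g' (e.symm z)) (volume.prod volume) := by
    rw [← Function.comp_def, he.symm.integrable_comp_emb e.symm.measurableEmbedding,
      integrable_indicator_iff hSo.measurableSet]
    exact hSb.integrableOn_of_continuousOn
      (((hg.continuousOn_fderiv_of_isOpen hUo le_rfl).clm_apply continuousOn_const).mono hSU)
  rw [← integral_indicator hSo.measurableSet, ← he.symm.integral_comp e.symm.measurableEmbedding,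
    integral_prod_symm _ hint]
  refine integral_eq_zero_of_ae (ae_of_all _ fun y => ?_)
  show ∫ t, S.indicator g' (e.symm (t, y)) = 0
  set p := e.symm (0, y)
  have hline : Continuous fun t : ℝ => p + t • v := by fun_prop
  calc ∫ t, S.indicator g' (e.symm (t, y))
      = ∫ t, ((fun t : ℝ => p + t • v) ⁻¹' S).indicator (fun t => g' (p + t • v)) t :=
        integral_congr_ae (ae_of_all _ fun t => by
          simp only [he_line t y]; exact (indicator_comp_right _).symm)
    _ = 0 := by
        rw [integral_indicator (hSo.preimage hline).measurableSet]
        exact setIntegral_fderiv_along_line_eq_zero hSb hSo hUo hSU hg hz p (by simp [v])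

/-- The density of the invariant measure of `L_ε`. -/
noncomputable def gibbsDensity {E : Type*} (ε : ℝ) (F : E → ℝ) (x : E) : ℝ :=
  Real.exp (-ε⁻¹ * F x)

section Flux

variable {E : Type*} [NormedAddCommGroup E] [NormedSpace ℝ E] {ε : ℝ} {F w φ : E → ℝ} {x : E}

theorem hasFDerivAt_gibbsDensity (hF : DifferentiableAt ℝ F x) :
    HasFDerivAt (gibbsDensity ε F) (gibbsDensity ε F x • -ε⁻¹ • fderiv ℝ F x) x :=
  (hF.hasFDerivAt.const_mul (-ε⁻¹)).exp

theorem fderiv_gibbsDensity_mul_flux_apply (v : E) (hF : DifferentiableAt ℝ F x)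
    (hw : DifferentiableAt ℝ w x) (hφ : DifferentiableAt ℝ φ x)
    (hw' : DifferentiableAt ℝ (fderiv ℝ w) x) (hφ' : DifferentiableAt ℝ (fderiv ℝ φ) x) :
    fderiv ℝ (fun y => gibbsDensity ε F y * (φ y * fderiv ℝ w y v - w y * fderiv ℝ φ y v)) x v =
      gibbsDensity ε F x *
        (φ x * (fderiv ℝ (fderiv ℝ w) x v v - ε⁻¹ * fderiv ℝ F x v * fderiv ℝ w x v) -
          w x * (fderiv ℝ (fderiv ℝ φ) x v v - ε⁻¹ * fderiv ℝ F x v * fderiv ℝ φ x v)) := by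
  have hflux : HasFDerivAt
      (fun y => gibbsDensity ε F y * (φ y * fderiv ℝ w y v - w y * fderiv ℝ φ y v)) _ x :=
    (hasFDerivAt_gibbsDensity hF).mul
      ((hφ.hasFDerivAt.mul (hw'.hasFDerivAt.clm_apply (hasFDerivAt_const v x))).sub
        (hw.hasFDerivAt.mul (hφ'.hasFDerivAt.clm_apply (hasFDerivAt_const v x))))
  rw [hflux.fderiv]
  simp only [ContinuousLinearMap.comp_zero, zero_add, neg_smul, smul_neg, add_apply, smul_apply,
    sub_apply, ContinuousLinearMap.flip_apply, neg_apply, smul_eq_mul]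
  ring

end Flux

theorem inner_gradient_eq_sum {d : ℕ} (f u : EuclideanSpace ℝ (Fin d) → ℝ)
    (x : EuclideanSpace ℝ (Fin d)) :
    inner ℝ (gradient f x) (gradient u x) = ∑ i : Fin d,
      fderiv ℝ f x (EuclideanSpace.single i 1) * fderiv ℝ u x (EuclideanSpace.single i 1) := by
  rw [← (EuclideanSpace.basisFun (Fin d) ℝ).sum_inner_mul_inner]
  simp only [EuclideanSpace.basisFun_apply, gradient, real_inner_comm _ (EuclideanSpace.single _ _),
    InnerProductSpace.toDual_symm_apply]

theorem Lop_eq_sum {d : ℕ} (ε : ℝ) (F u : EuclideanSpace ℝ (Fin d) → ℝ)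
    (x : EuclideanSpace ℝ (Fin d)) :
    Lop ε F u x = ∑ i : Fin d, (-ε * fderiv ℝ (fderiv ℝ u) x (EuclideanSpace.single i 1)
        (EuclideanSpace.single i 1) +
      fderiv ℝ F x (EuclideanSpace.single i 1) * fderiv ℝ u x (EuclideanSpace.single i 1)) := by
  rw [Lop, laplacian, inner_gradient_eq_sum, Finset.mul_sum, ← Finset.sum_add_distrib]
  simp [iteratedFDeriv_two_apply]

theorem sum_fderiv_gibbsDensity_mul_flux {d : ℕ} {ε : ℝ} (hε : ε ≠ 0)
    {F w φ : EuclideanSpace ℝ (Fin d) → ℝ} {x : EuclideanSpace ℝ (Fin d)}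
    (hF : DifferentiableAt ℝ F x) (hw : DifferentiableAt ℝ w x) (hφ : DifferentiableAt ℝ φ x)
    (hw' : DifferentiableAt ℝ (fderiv ℝ w) x) (hφ' : DifferentiableAt ℝ (fderiv ℝ φ) x) :
    ∑ i : Fin d, fderiv ℝ (fun y => gibbsDensity ε F y *
        (φ y * fderiv ℝ w y (EuclideanSpace.single i 1) -
          w y * fderiv ℝ φ y (EuclideanSpace.single i 1))) x (EuclideanSpace.single i 1) =
      ε⁻¹ * gibbsDensity ε F x * (w x * Lop ε F φ x - φ x * Lop ε F w x) := by
  rw [Lop_eq_sum, Lop_eq_sum, Finset.mul_sum, Finset.mul_sum, ← Finset.sum_sub_distrib,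
    Finset.mul_sum]
  refine Finset.sum_congr rfl fun i _ => ?_
  rw [fderiv_gibbsDensity_mul_flux_apply _ hF hw hφ hw' hφ']
  field_simp
  ring

theorem setIntegral_gibbsDensity_mul_Lop_sub_eq_zero {d : ℕ} {ε : ℝ} (hε : ε ≠ 0)
    {F : EuclideanSpace ℝ (Fin d) → ℝ} (hF : ContDiff ℝ 1 F)
    {S U : Set (EuclideanSpace ℝ (Fin d))} (hSb : Bornology.IsBounded S) (hSo : IsOpen S)
    (hUo : IsOpen U) (hSU : closure S ⊆ U) {w φ : EuclideanSpace ℝ (Fin d) → ℝ}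
    (hw : ContDiffOn ℝ 2 w U) (hφ : ContDiffOn ℝ 2 φ U)
    (hw0 : ∀ x ∈ frontier S, w x = 0) (hφ0 : ∀ x ∈ frontier S, φ x = 0) :
    ∫ x in S, gibbsDensity ε F x * (w x * Lop ε F φ x - φ x * Lop ε F w x) = 0 := by
  set e : Fin d → EuclideanSpace ℝ (Fin d) := fun i => EuclideanSpace.single i 1
  set G : Fin d → EuclideanSpace ℝ (Fin d) → ℝ := fun i y =>
    gibbsDensity ε F y * (φ y * fderiv ℝ w y (e i) - w y * fderiv ℝ φ y (e i))
  have hρ : ContDiff ℝ 1 (gibbsDensity ε F) := (contDiff_const.mul hF).exp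
  have hw' := hw.fderiv_of_isOpen hUo (m := 1) (by norm_num)
  have hφ' := hφ.fderiv_of_isOpen hUo (m := 1) (by norm_num)
  have hG : ∀ i, ContDiffOn ℝ 1 (G i) U := fun i =>
    hρ.contDiffOn.mul (((hφ.of_le (by norm_num)).mul (hw'.clm_apply contDiffOn_const)).sub
      ((hw.of_le (by norm_num)).mul (hφ'.clm_apply contDiffOn_const)))
  have hdiv : ∀ x ∈ S, gibbsDensity ε F x * (w x * Lop ε F φ x - φ x * Lop ε F w x) =
      ε * ∑ i, fderiv ℝ (G i) x (e i) := fun x hx => by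
    have hxU : U ∈ nhds x := hUo.mem_nhds (hSU (subset_closure hx))
    rw [sum_fderiv_gibbsDensity_mul_flux hε (hF.differentiable one_ne_zero x)
      ((hw.differentiableOn (by norm_num)).differentiableAt hxU)
      ((hφ.differentiableOn (by norm_num)).differentiableAt hxU)
      ((hw'.differentiableOn one_ne_zero).differentiableAt hxU)
      ((hφ'.differentiableOn one_ne_zero).differentiableAt hxU)]
    field_simp
  rw [setIntegral_congr_fun hSo.measurableSet hdiv, integral_const_mul,
    integral_finsetSum _ fun i _ => hSb.integrableOn_of_continuousOn
      ((((hG i).continuousOn_fderiv_of_isOpen hUo le_rfl).clm_apply continuousOn_const).mono hSU)]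
  refine mul_eq_zero_of_right _ (Finset.sum_eq_zero fun i _ => ?_)
  exact setIntegral_fderiv_single_eq_zero hSb hSo hUo hSU (hG i)
    (fun x hx => by simp [G, hw0 x hx, hφ0 x hx]) i

theorem one_le_mul_of_mul_eq_of_le {a b lam s : ℝ} (ha : 0 < a) (hb : 0 ≤ b)
    (heq : lam * b = a) (hle : b ≤ s * a) : 1 ≤ lam * s := by
  have hlam : 0 ≤ lam := by
    by_contra! hneg
    linarith [mul_nonpos_of_nonpos_of_nonneg hneg.le hb]
  refine le_of_mul_le_mul_left ?_ ha
  calc a * 1 = lam * b := by rw [mul_one, heq]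
    _ ≤ lam * (s * a) := mul_le_mul_of_nonneg_left hle hlam
    _ = a * (lam * s) := by ring

theorem stmt_0_general {d : ℕ} (ε : ℝ) (hε : 0 < ε)
    (F : EuclideanSpace ℝ (Fin d) → ℝ) (hF : ContDiff ℝ 1 F)
    (S : Set (EuclideanSpace ℝ (Fin d)))
    (hSbd : Bornology.IsBounded S) (hSopen : IsOpen S) (hSconn : IsConnected S)
    (h w φ : EuclideanSpace ℝ (Fin d) → ℝ)
    (U : Set (EuclideanSpace ℝ (Fin d))) (hUopen : IsOpen U) (hSU : closure S ⊆ U)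
    (hh2 : ContDiffOn ℝ 2 h U) (hw2 : ContDiffOn ℝ 2 w U) (hφ2 : ContDiffOn ℝ 2 φ U)
    (hhpos : ∀ x ∈ S, 0 < h x)
    (hweq : ∀ x ∈ S, Lop ε F w x = h x) (hwbd : ∀ x ∈ frontier S, w x = 0)
    (hwpos : ∀ x ∈ S, 0 < w x)
    (lam : ℝ)
    (hφeq : ∀ x ∈ S, Lop ε F φ x = lam * φ x) (hφbd : ∀ x ∈ frontier S, φ x = 0)
    (hφpos : ∀ x ∈ S, 0 < φ x)
    (hfin : BddAbove ((fun x => w x / h x) '' S)) :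
    1 ≤ lam * sSup ((fun x => w x / h x) '' S) := by
  set ρ := gibbsDensity ε F
  have hρ : Continuous ρ := (continuous_const.mul hF.continuous).rexp
  have hρpos : ∀ x, 0 < ρ x := fun x => Real.exp_pos _
  have hI₁ : IntegrableOn (fun x => ρ x * (φ x * h x)) S := hSbd.integrableOn_of_continuousOn
    ((hρ.continuousOn.mul (hφ2.continuousOn.mul hh2.continuousOn)).mono hSU)
  have hI₂ : IntegrableOn (fun x => ρ x * (w x * φ x)) S := hSbd.integrableOn_of_continuousOn
    ((hρ.continuousOn.mul (hw2.continuousOn.mul hφ2.continuousOn)).mono hSU)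
  refine one_le_mul_of_mul_eq_of_le
    (hSopen.setIntegral_pos hSconn.nonempty hI₁ fun x hx =>
      mul_pos (hρpos x) (mul_pos (hφpos x hx) (hhpos x hx)))
    (setIntegral_nonneg (μ := volume) hSopen.measurableSet fun x hx =>
      (mul_pos (hρpos x) (mul_pos (hwpos x hx) (hφpos x hx))).le) ?_ ?_
  · rw [← sub_eq_zero, ← integral_const_mul, ← integral_sub (hI₂.const_mul lam) hI₁,
      ← setIntegral_gibbsDensity_mul_Lop_sub_eq_zero hε.ne' hF hSbd hSopen hUopen hSU hw2 hφ2
        hwbd hφbd]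
    refine setIntegral_congr_fun hSopen.measurableSet fun x hx => ?_
    simp only [hweq x hx, hφeq x hx]
    ring
  · rw [← integral_const_mul]
    refine setIntegral_mono_on hI₂ (hI₁.const_mul _) hSopen.measurableSet fun x hx => ?_
    have hws : w x ≤ sSup ((fun x => w x / h x) '' S) * h x :=
      (div_le_iff₀ (hhpos x hx)).1 (le_csSup hfin ⟨x, hx, rfl⟩)
    linarith [mul_le_mul_of_nonneg_left hws (mul_pos (hρpos x) (hφpos x hx)).le]

/-- uncertainty principle `λ ≥ 1 / sup_Σ (w/h)` (Lemma 2.1). -/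
theorem stmt_0 {d : ℕ} (ε : ℝ) (hε : 0 < ε)
    (F : EuclideanSpace ℝ (Fin d) → ℝ) (hF : ContDiff ℝ 1 F)
    (S : Set (EuclideanSpace ℝ (Fin d)))
    (hSbd : Bornology.IsBounded S) (hSopen : IsOpen S) (hSconn : IsConnected S)
    (h w φ : EuclideanSpace ℝ (Fin d) → ℝ)
    (U : Set (EuclideanSpace ℝ (Fin d))) (hUopen : IsOpen U) (hSU : closure S ⊆ U)
    (hh2 : ContDiffOn ℝ 2 h U) (hw2 : ContDiffOn ℝ 2 w U) (hφ2 : ContDiffOn ℝ 2 φ U)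
    (hhharm : ∀ x ∈ S, Lop ε F h x = 0) (hhpos : ∀ x ∈ S, 0 < h x)
    (hweq : ∀ x ∈ S, Lop ε F w x = h x) (hwbd : ∀ x ∈ frontier S, w x = 0)
    (hwpos : ∀ x ∈ S, 0 < w x)
    (lam : ℝ)
    (hφeq : ∀ x ∈ S, Lop ε F φ x = lam * φ x) (hφbd : ∀ x ∈ frontier S, φ x = 0)
    (hφpos : ∀ x ∈ S, 0 < φ x)
    (hfin : BddAbove ((fun x => w x / h x) '' S)) :
    1 ≤ lam * sSup ((fun x => w x / h x) '' S) :=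
  stmt_0_general ε hε F hF S hSbd hSopen hSconn h w φ U hUopen hSU hh2 hw2 hφ2 hhpos hweq hwbd hwpos
    lam hφeq hφbd hφpos hfin
end

section
/- Let F : ℝ^d → ℝ be C¹, let ε > 0, x ∈ ℝ^d and R > 0, and suppose the drift is small on the ball B(x, R) in the sense that 2R·sup_{B(x,R)} |∇F| ≤ d·ε. Let w be C² in B(x, R), continuous on the closed ball, and satisfy −ε·Δw + ⟨∇F, ∇w⟩ = 1 in B(x, R) with w = 0 on ∂B(x, R). Then for every y ∈ B(x, R): (R² − |y − x|²)/(3dε) ≤ w(y) ≤ (R² − |y − x|²)/(dε). -/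
open Metric Set

/-!
The bounds come from comparing `w` with multiples `c · v` of the paraboloid
`v(y) = R² - |y - x|²`, which vanishes on the sphere and satisfies
`L_ε v = 2dε - 2⟨∇F, y - x⟩ ∈ [dε, 3dε]` by the drift condition. The comparison principle
(a consequence of the strict maximum principle, since at an interior maximum of `φ` the
gradient vanishes and `Δφ ≤ 0`) gives `w ≤ c v` whenever `c dε > 1` and `c v ≤ w` whenever
`3 c dε < 1`; letting `c` tend to `1/(dε)` and `1/(3dε)` gives the claim.
-/

open Filter Topology

theorem IsLocalMax.deriv_deriv_nonpos {f : ℝ → ℝ} {a : ℝ} (hmax : IsLocalMax f a)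
    (hf : ContinuousAt f a) : deriv (deriv f) a ≤ 0 := by
  by_contra! hpos
  -- the second derivative test would make `a` a local minimum too, so `f` is locally constant
  have hmin : IsLocalMin f a := isLocalMin_of_deriv_deriv_pos hpos hmax.deriv_eq_zero hf
  have hconst : f =ᶠ[𝓝 a] fun _ => f a := by
    filter_upwards [hmin, hmax] with t h₁ h₂ using le_antisymm h₂ h₁
  have hderiv : deriv f =ᶠ[𝓝 a] fun _ => 0 := by
    filter_upwards [hconst.eventuallyEq_nhds] with t ht
    rw [ht.deriv_eq, deriv_const]
  simp [hderiv.deriv_eq] at hpos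

theorem IsLocalMax.fderiv_fderiv_apply_self_nonpos {E : Type*} [NormedAddCommGroup E]
    [NormedSpace ℝ E] {φ : E → ℝ} {z : E} (hmax : IsLocalMax φ z) (hφ : ContDiffAt ℝ 2 φ z)
    (e : E) : fderiv ℝ (fderiv ℝ φ) z e e ≤ 0 := by
  have hline : ∀ t : ℝ, HasDerivAt (fun t : ℝ => z + t • e) e t := fun t => by
    simpa using ((hasDerivAt_id t).smul_const e).const_add z
  have hline0 : ContinuousAt (fun t : ℝ => z + t • e) 0 := (hline 0).continuousAt
  have hderiv : deriv (fun t : ℝ => φ (z + t • e)) =ᶠ[𝓝 0]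
      fun t => fderiv ℝ φ (z + t • e) e := by
    have hdiff : ∀ᶠ y in 𝓝 (z + (0 : ℝ) • e), DifferentiableAt ℝ φ y := by
      simpa using (hφ.eventually (by simp)).mono fun y hy => hy.differentiableAt two_ne_zero
    filter_upwards [hline0.eventually hdiff] with t ht
    exact (ht.hasFDerivAt.comp_hasDerivAt t (hline t)).deriv
  have hφ' : DifferentiableAt ℝ (fderiv ℝ φ) z :=
    (hφ.fderiv_right (m := 1) le_rfl).differentiableAt one_ne_zero
  have hsecond : HasDerivAt (fun t : ℝ => fderiv ℝ φ (z + t • e) e)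
      (fderiv ℝ (fderiv ℝ φ) z e e) 0 := by
    simpa using (hφ'.hasFDerivAt.comp_hasDerivAt_of_eq 0 (hline 0) (by simp)).clm_apply
      (hasDerivAt_const 0 e)
  rw [← hsecond.deriv, ← hderiv.deriv_eq]
  exact (IsLocalMax.comp_continuous (by simpa using hmax) hline0).deriv_deriv_nonpos
    (hφ.continuousAt.comp_of_eq hline0 (by simp))

section Euclidean

variable {d : ℕ}

local notation "𝔼" => EuclideanSpace ℝ (Fin d)

theorem laplacian_eq_sum_fderiv_fderiv (u : 𝔼 → ℝ) (z : 𝔼) :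
    laplacian u z = ∑ i, fderiv ℝ (fderiv ℝ u) z (EuclideanSpace.single i 1)
      (EuclideanSpace.single i 1) := by
  simp [laplacian, iteratedFDeriv_two_apply]

theorem laplacian_sub {u v : 𝔼 → ℝ} {z : 𝔼} (hu : ContDiffAt ℝ 2 u z)
    (hv : ContDiffAt ℝ 2 v z) : laplacian (u - v) z = laplacian u z - laplacian v z := by
  simp [laplacian, iteratedFDeriv_sub_apply hu hv, Finset.sum_sub_distrib]

theorem IsLocalMax.laplacian_nonpos {φ : 𝔼 → ℝ} {z : 𝔼} (hmax : IsLocalMax φ z)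
    (hφ : ContDiffAt ℝ 2 φ z) : laplacian φ z ≤ 0 := by
  rw [laplacian_eq_sum_fderiv_fderiv]
  exact Finset.sum_nonpos fun i _ => hmax.fderiv_fderiv_apply_self_nonpos hφ _

theorem Lop_eq_fderiv (ε : ℝ) (F u : 𝔼 → ℝ) (z : 𝔼) :
    Lop ε F u z = -ε * laplacian u z + fderiv ℝ u z (gradient F z) := by
  rw [Lop, inner_gradient_right]
  rfl

theorem Lop_sub {ε : ℝ} {F u v : 𝔼 → ℝ} {z : 𝔼} (hu : ContDiffAt ℝ 2 u z)
    (hv : ContDiffAt ℝ 2 v z) : Lop ε F (u - v) z = Lop ε F u z - Lop ε F v z := by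
  simp only [Lop_eq_fderiv, laplacian_sub hu hv,
    fderiv_sub (hu.differentiableAt two_ne_zero) (hv.differentiableAt two_ne_zero),
    sub_apply]
  ring

theorem IsLocalMax.Lop_nonneg {ε : ℝ} (hε : 0 ≤ ε) (F : 𝔼 → ℝ) {φ : 𝔼 → ℝ} {z : 𝔼}
    (hmax : IsLocalMax φ z) (hφ : ContDiffAt ℝ 2 φ z) : 0 ≤ Lop ε F φ z := by
  rw [Lop_eq_fderiv, hmax.fderiv_eq_zero, zero_apply, add_zero]
  nlinarith [hmax.laplacian_nonpos hφ]

theorem nonpos_of_Lop_neg {ε : ℝ} (hε : 0 ≤ ε) {F φ : 𝔼 → ℝ} {U : Set 𝔼} (hU : IsOpen U)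
    (hUb : Bornology.IsBounded U) (hφ2 : ContDiffOn ℝ 2 φ U)
    (hφc : ContinuousOn φ (closure U)) (hb : ∀ y ∈ frontier U, φ y ≤ 0)
    (hL : ∀ y ∈ U, Lop ε F φ y < 0) : ∀ y ∈ closure U, φ y ≤ 0 := by
  intro y hy
  obtain ⟨z, hz, hzmax⟩ := hUb.isCompact_closure.exists_isMaxOn ⟨y, hy⟩ hφc
  refine (hzmax hy).trans ?_
  by_cases hzU : z ∈ U
  · have hmax : IsLocalMax φ z :=
      hzmax.isLocalMax (mem_of_superset (hU.mem_nhds hzU) subset_closure)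
    exact absurd (hmax.Lop_nonneg hε F (hφ2.contDiffAt (hU.mem_nhds hzU))) (hL z hzU).not_ge
  · exact hb z ⟨hz, by rwa [hU.interior_eq]⟩

theorem le_of_Lop_lt_Lop {ε : ℝ} (hε : 0 ≤ ε) {F u v : 𝔼 → ℝ} {U : Set 𝔼} (hU : IsOpen U)
    (hUb : Bornology.IsBounded U) (hu2 : ContDiffOn ℝ 2 u U) (hv2 : ContDiffOn ℝ 2 v U)
    (huc : ContinuousOn u (closure U)) (hvc : ContinuousOn v (closure U))
    (hb : ∀ y ∈ frontier U, u y ≤ v y) (hL : ∀ y ∈ U, Lop ε F u y < Lop ε F v y) :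
    ∀ y ∈ closure U, u y ≤ v y := by
  intro y hy
  refine sub_nonpos.1 <| nonpos_of_Lop_neg hε (F := F) (φ := u - v) hU hUb (hu2.sub hv2)
    (huc.sub hvc) (fun z hz => sub_nonpos.2 (hb z hz)) (fun z hz => ?_) y hy
  rw [Lop_sub (hu2.contDiffAt (hU.mem_nhds hz)) (hv2.contDiffAt (hU.mem_nhds hz))]
  exact sub_neg.2 (hL z hz)

theorem le_of_Lop_lt_Lop_ball {ε : ℝ} (hε : 0 ≤ ε) {F u v : 𝔼 → ℝ} {x : 𝔼} {R : ℝ}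
    (hR : 0 < R) (hu2 : ContDiffOn ℝ 2 u (ball x R)) (hv2 : ContDiffOn ℝ 2 v (ball x R))
    (huc : ContinuousOn u (closedBall x R)) (hvc : ContinuousOn v (closedBall x R))
    (hb : ∀ y ∈ sphere x R, u y ≤ v y) (hL : ∀ y ∈ ball x R, Lop ε F u y < Lop ε F v y) :
    ∀ y ∈ ball x R, u y ≤ v y := fun y hy => by
  rw [← closure_ball x hR.ne'] at huc hvc
  rw [← frontier_ball x hR.ne'] at hb
  exact le_of_Lop_lt_Lop hε isOpen_ball isBounded_ball hu2 hv2 huc hvc hb hL y (subset_closure hy)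

theorem contDiff_paraboloid (x : 𝔼) (a c : ℝ) :
    ContDiff ℝ 2 fun y : 𝔼 => a * (c - ‖y - x‖ ^ 2) :=
  contDiff_const.mul (contDiff_const.sub ((contDiff_id.sub contDiff_const).norm_sq ℝ))

theorem hasFDerivAt_paraboloid (x : 𝔼) (a c : ℝ) (y : 𝔼) :
    HasFDerivAt (fun y : 𝔼 => a * (c - ‖y - x‖ ^ 2)) ((-(2 * a)) • innerSL ℝ (y - x)) y := by
  refine ((((hasFDerivAt_id y).sub_const x).norm_sq.const_sub c).const_mul a).congr_fderiv ?_
  ext h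
  simp only [id_eq, map_sub, ContinuousLinearMap.comp_id, smul_neg, neg_apply, smul_apply,
    sub_apply, coe_innerSL_apply, nsmul_eq_mul, Nat.cast_ofNat, smul_eq_mul, neg_smul, neg_inj]
  ring

theorem laplacian_paraboloid (x : 𝔼) (a c : ℝ) (z : 𝔼) :
    laplacian (fun y : 𝔼 => a * (c - ‖y - x‖ ^ 2)) z = -(2 * a * d) := by
  have hfd : fderiv ℝ (fun y : 𝔼 => a * (c - ‖y - x‖ ^ 2))
      = fun y => (-(2 * a)) • (innerSL ℝ y - innerSL ℝ x) := by
    funext y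
    rw [(hasFDerivAt_paraboloid x a c y).fderiv, map_sub]
  have hfdd : HasFDerivAt (fun y : 𝔼 => (-(2 * a)) • (innerSL ℝ y - innerSL ℝ x))
      ((-(2 * a)) • innerSL ℝ : 𝔼 →L[ℝ] 𝔼 →L[ℝ] ℝ) z :=
    ((innerSL ℝ).hasFDerivAt.sub_const (innerSL ℝ x)).const_smul (-(2 * a))
  have hdiag : ∀ i : Fin d, ((-(2 * a)) • innerSL ℝ : 𝔼 →L[ℝ] 𝔼 →L[ℝ] ℝ)
      (EuclideanSpace.single i 1) (EuclideanSpace.single i 1) = -(2 * a) := fun i => by simp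
  rw [laplacian_eq_sum_fderiv_fderiv, hfd, hfdd.fderiv, Finset.sum_congr rfl fun i _ => hdiag i]
  simp [mul_comm]

theorem Lop_paraboloid (ε : ℝ) (F : 𝔼 → ℝ) (x : 𝔼) (a c : ℝ) (z : 𝔼) :
    Lop ε F (fun y : 𝔼 => a * (c - ‖y - x‖ ^ 2)) z
      = a * (2 * d * ε - 2 * inner ℝ (z - x) (gradient F z)) := by
  rw [Lop_eq_fderiv, laplacian_paraboloid, (hasFDerivAt_paraboloid x a c z).fderiv]
  simp only [mul_neg, neg_mul, neg_neg, map_sub, neg_smul, neg_apply, smul_apply, sub_apply,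
    coe_innerSL_apply, inner_gradient_right, Real.ringHom_apply, smul_eq_mul]
  ring

end Euclidean

theorem div_le_of_forall_mul_lt_one {a k q : ℝ} (hk : 0 < k) (hq : 0 < q)
    (h : ∀ c, c * k < 1 → c * q ≤ a) : q / k ≤ a := by
  have : k⁻¹ ≤ a / q := le_of_forall_lt_imp_le_of_dense fun c hc =>
    (le_div_iff₀ hq).2 (h c (by rwa [← lt_div_iff₀ hk, one_div]))
  rwa [le_div_iff₀ hq, ← div_eq_inv_mul] at this

theorem le_div_of_forall_one_lt_mul {a k q : ℝ} (hk : 0 < k) (hq : 0 < q)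
    (h : ∀ c, 1 < c * k → a ≤ c * q) : a ≤ q / k := by
  have : a / q ≤ k⁻¹ := le_of_forall_gt_imp_ge_of_dense fun c hc =>
    (div_le_iff₀ hq).2 (h c (by rwa [← div_lt_iff₀ hk, one_div]))
  rwa [div_le_iff₀ hq, ← div_eq_inv_mul] at this

theorem abs_inner_le_mul_sSup_norm {E : Type*} [NormedAddCommGroup E] [InnerProductSpace ℝ E]
    [ProperSpace E] {g : E → E} {x z : E} {R : ℝ} (hg : ContinuousOn g (closedBall x R))
    (hz : z ∈ ball x R) :
    |inner ℝ (z - x) (g z)| ≤ R * sSup ((fun y => ‖g y‖) '' ball x R) := by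
  have hbdd : BddAbove ((fun y => ‖g y‖) '' ball x R) :=
    ((isCompact_closedBall x R).bddAbove_image hg.norm).mono (image_mono ball_subset_closedBall)
  calc |inner ℝ (z - x) (g z)| ≤ ‖z - x‖ * ‖g z‖ := abs_real_inner_le_norm _ _
    _ ≤ R * sSup ((fun y => ‖g y‖) '' ball x R) :=
      mul_le_mul (mem_ball_iff_norm.1 hz).le (le_csSup hbdd ⟨z, hz, rfl⟩) (norm_nonneg _)
        (pos_of_mem_ball hz).le

theorem abs_two_mul_inner_gradient_le {d : ℕ} {F : EuclideanSpace ℝ (Fin d) → ℝ}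
    (hF : ContDiff ℝ 1 F) {ε : ℝ} {x z : EuclideanSpace ℝ (Fin d)} {R : ℝ}
    (hdrift : 2 * R * sSup ((fun y => ‖gradient F y‖) '' ball x R) ≤ d * ε)
    (hz : z ∈ ball x R) : |2 * inner ℝ (z - x) (gradient F z)| ≤ d * ε := by
  have hgrad : Continuous (gradient F) :=
    (InnerProductSpace.toDual ℝ _).symm.continuous.comp (hF.continuous_fderiv one_ne_zero)
  rw [abs_mul, abs_two]
  nlinarith [abs_inner_le_mul_sSup_norm hgrad.continuousOn hz]

/-- two-sided bound on the solution of `L_ε w = 1` with zero boundary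
values on a small ball (bounds (2.20)–(2.21) from the proof of Lemma 2.3). -/
theorem stmt_5 {d : ℕ} (F : EuclideanSpace ℝ (Fin d) → ℝ) (hF : ContDiff ℝ 1 F)
    (ε : ℝ) (hε : 0 < ε) (x : EuclideanSpace ℝ (Fin d)) (R : ℝ) (hR : 0 < R)
    (hdrift : 2 * R * sSup ((fun y => ‖gradient F y‖) '' Metric.ball x R) ≤ d * ε)
    (w : EuclideanSpace ℝ (Fin d) → ℝ)
    (hw2 : ContDiffOn ℝ 2 w (Metric.ball x R))
    (hwc : ContinuousOn w (Metric.closedBall x R))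
    (hweq : ∀ y ∈ Metric.ball x R, Lop ε F w y = 1)
    (hwbd : ∀ y ∈ Metric.sphere x R, w y = 0) :
    ∀ y ∈ Metric.ball x R,
      (R ^ 2 - ‖y - x‖ ^ 2) / (3 * d * ε) ≤ w y ∧
        w y ≤ (R ^ 2 - ‖y - x‖ ^ 2) / (d * ε) := by
  intro y hy
  -- in dimension zero `Lop ε F w` vanishes identically
  have hd : 0 < d := Nat.pos_of_ne_zero fun hd => by
    subst hd
    have h := hweq x (mem_ball_self hR)
    simp [Lop, laplacian, Subsingleton.elim (gradient F x) 0] at h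
  have hdε : 0 < d * ε := by positivity
  have hv0 : ∀ c, ∀ z ∈ sphere x R, c * (R ^ 2 - ‖z - x‖ ^ 2) = 0 := fun c z hz => by
    rw [← dist_eq_norm, mem_sphere.1 hz, sub_self, mul_zero]
  have hQ : 0 < R ^ 2 - ‖y - x‖ ^ 2 := by
    have := mem_ball_iff_norm.1 hy
    nlinarith [norm_nonneg (y - x)]
  constructor
  · refine div_le_of_forall_mul_lt_one (by positivity) hQ fun c hc => ?_
    refine le_of_Lop_lt_Lop_ball hε.le (F := F) hR (contDiff_paraboloid x c _).contDiffOn hw2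
      (contDiff_paraboloid x c _).continuous.continuousOn hwc
      (fun z hz => by rw [hv0 c z hz, hwbd z hz]) (fun z hz => ?_) y hy
    rw [Lop_paraboloid, hweq z hz]
    have := abs_le.1 (abs_two_mul_inner_gradient_le hF hdrift hz)
    rcases le_or_gt 0 c with hc0 | hc0 <;> nlinarith
  · refine le_div_of_forall_one_lt_mul hdε hQ fun c hc => ?_
    refine le_of_Lop_lt_Lop_ball hε.le (F := F) hR hw2 (contDiff_paraboloid x c _).contDiffOn
      hwc (contDiff_paraboloid x c _).continuous.continuousOn
      (fun z hz => by rw [hv0 c z hz, hwbd z hz]) (fun z hz => ?_) y hy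
    rw [Lop_paraboloid, hweq z hz]
    have := abs_le.1 (abs_two_mul_inner_gradient_le hF hdrift hz)
    nlinarith
end

section
/- Let F : ℝ^d → ℝ be C¹, let ε > 0, x ∈ ℝ^d and R > 0, and suppose 2R·sup_{B(x,R)} |∇F| ≤ d·ε. Let φ be C² on an open neighborhood of the closed ball B̄(x, R) with φ > 0 in B(x, R), φ = 0 on ∂B(x, R), and −ε·Δφ + ⟨∇F, ∇φ⟩ = λ·φ in B(x, R) for some λ ∈ ℝ. Then λ ≥ d·ε/R². In particular, if R = δ·ε with δ ∈ (1/8, 1), the principal Dirichlet eigenvalue of L_ε on B(x, R) is at least d/(δ²ε) ≥ 1/(C·ε) for a constant C depending only on d. -/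
/-!
Let `v(y) = R'² - ‖y - x‖²` with `R' > R`, so that `v > 0` on the closed ball and
`L_ε v = 2dε - 2⟨∇F, y - x⟩ ≥ dε` there by the drift assumption. Maximizing `φ / v` over the
closed ball gives `s > 0` and a point `y₀`, necessarily inside the open ball since `φ` vanishes on
the sphere, at which `φ - s v` attains a local maximum and `φ(y₀) = s v(y₀)`. At such a point
`∇φ = s ∇v` and `Δφ ≤ s Δv`, hence `λ s v(y₀) = L_ε φ(y₀) ≥ s L_ε v(y₀) ≥ s dε`, i.e.
`λ R'² ≥ λ v(y₀) ≥ dε`. Letting `R' ↓ R` gives `λ ≥ dε / R²`.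
-/

open Metric Set

open Filter Topology InnerProductSpace
open scoped Laplacian RealInnerProductSpace

theorem IsLocalMax.deriv_deriv_nonpos_s6 {h : ℝ → ℝ} {t : ℝ} (hmax : IsLocalMax h t)
    (hc : ContinuousAt h t) : deriv (deriv h) t ≤ 0 := by
  by_contra! hpos
  have hconst : h =ᶠ[𝓝 t] fun _ => h t := by
    filter_upwards [hmax, isLocalMin_of_deriv_deriv_pos hpos hmax.deriv_eq_zero hc] with s h₁ h₂
    exact le_antisymm h₁ h₂
  have hderiv : deriv h =ᶠ[𝓝 t] fun _ => 0 := by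
    filter_upwards [hconst.eventuallyEq_nhds] with s hs
    rw [hs.deriv_eq, deriv_const]
  rw [hderiv.deriv_eq, deriv_const] at hpos
  exact lt_irrefl _ hpos

theorem IsLocalMax.nonpos_of_hasDerivAt_of_hasDerivAt {h h' : ℝ → ℝ} {t c : ℝ}
    (hmax : IsLocalMax h t) (hd : ∀ᶠ s in 𝓝 t, HasDerivAt h (h' s) s)
    (hd2 : HasDerivAt h' c t) : c ≤ 0 := by
  have hderiv : deriv h =ᶠ[𝓝 t] h' := hd.mono fun s hs => hs.deriv
  have := hmax.deriv_deriv_nonpos_s6 hd.self_of_nhds.continuousAt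
  rwa [hderiv.deriv_eq, hd2.deriv] at this

section SecondDerivativeTest

variable {E : Type*} [NormedAddCommGroup E] [NormedSpace ℝ E]

theorem IsLocalMax.iteratedFDeriv_two_nonpos {g : E → ℝ} {y : E} (hmax : IsLocalMax g y)
    (hg : ContDiffAt ℝ 2 g y) (v : E) : iteratedFDeriv ℝ 2 g y ![v, v] ≤ 0 := by
  have hline (t : ℝ) : HasDerivAt (fun t : ℝ => y + t • v) v t := by
    simpa using ((hasDerivAt_id t).smul_const v).const_add y
  have hline_tendsto : Tendsto (fun t : ℝ => y + t • v) (𝓝 0) (𝓝 y) := by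
    simpa using (hline 0).continuousAt.tendsto
  rw [iteratedFDeriv_two_apply]
  refine IsLocalMax.nonpos_of_hasDerivAt_of_hasDerivAt (h := fun t : ℝ => g (y + t • v))
    (h' := fun t => fderiv ℝ g (y + t • v) v) (t := 0) ?_ ?_ ?_
  · simpa [IsLocalMax, IsMaxFilter] using hline_tendsto.eventually hmax
  · filter_upwards [hline_tendsto.eventually (hg.eventually (by simp))] with t ht
    exact (ht.differentiableAt two_ne_zero).hasFDerivAt.comp_hasDerivAt t (hline t)
  · have hg' : HasFDerivAt (fderiv ℝ g) (fderiv ℝ (fderiv ℝ g) y) (y + (0 : ℝ) • v) := by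
      simpa using ((hg.fderiv_right (m := 1) le_rfl).differentiableAt one_ne_zero).hasFDerivAt
    exact (ContinuousLinearMap.apply ℝ ℝ v).hasFDerivAt.comp_hasDerivAt 0
      (hg'.comp_hasDerivAt 0 (hline 0))

end SecondDerivativeTest

section Laplacian

variable {E : Type*} [NormedAddCommGroup E] [InnerProductSpace ℝ E] [FiniteDimensional ℝ E]

theorem IsLocalMax.laplacian_nonpos_s6 {g : E → ℝ} {y : E} (hmax : IsLocalMax g y)
    (hg : ContDiffAt ℝ 2 g y) : Δ g y ≤ 0 := by
  rw [laplacian_eq_iteratedFDeriv_stdOrthonormalBasis]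
  exact Finset.sum_nonpos fun i _ => hmax.iteratedFDeriv_two_nonpos hg _

omit [FiniteDimensional ℝ E] in
theorem fderiv_norm_sub_sq (x : E) :
    fderiv ℝ (fun z => ‖z - x‖ ^ 2) = fun y => (2 • innerSL ℝ) (y - x) := by
  ext1 y
  rw [fderiv_comp_sub (f := fun z : E => ‖z‖ ^ 2), fderiv_norm_sq]
  rfl

theorem laplacian_norm_sub_sq (x y : E) :
    Δ (fun z => ‖z - x‖ ^ 2) y = 2 * Module.finrank ℝ E := by
  have hsecond (v w : E) : fderiv ℝ (fderiv ℝ fun z => ‖z - x‖ ^ 2) y v w = 2 * ⟪v, w⟫_ℝ := by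
    rw [fderiv_norm_sub_sq, fderiv_comp_sub (f := ⇑(2 • innerSL ℝ (E := E))),
      ContinuousLinearMap.fderiv]
    change (2 : ℕ) • ⟪v, w⟫_ℝ = _
    rw [two_nsmul, two_mul]
  simp [laplacian_eq_iteratedFDeriv_stdOrthonormalBasis, iteratedFDeriv_two_apply, hsecond,
    OrthonormalBasis.norm_eq_one, mul_comm]

end Laplacian

theorem exists_mem_ball_le_mul_of_eq_zero_on_sphere {X : Type*} [PseudoMetricSpace X]
    [ProperSpace X] {φ v : X → ℝ} {x : X} {R : ℝ} (hR : 0 < R)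
    (hφ : ContinuousOn φ (closedBall x R)) (hv : ContinuousOn v (closedBall x R))
    (hvpos : ∀ y ∈ closedBall x R, 0 < v y) (hφpos : ∀ y ∈ ball x R, 0 < φ y)
    (hφbd : ∀ y ∈ sphere x R, φ y = 0) :
    ∃ y₀ ∈ ball x R, ∃ s, 0 < s ∧ φ y₀ = s * v y₀ ∧ ∀ y ∈ closedBall x R, φ y ≤ s * v y := by
  have hx : x ∈ closedBall x R := mem_closedBall_self hR.le
  obtain ⟨y₀, hy₀, hmax⟩ := (isCompact_closedBall x R).exists_isMaxOn ⟨x, hx⟩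
    (hφ.div hv fun y hy => (hvpos y hy).ne')
  have hs : 0 < φ y₀ / v y₀ :=
    (div_pos (hφpos x (mem_ball_self hR)) (hvpos x hx)).trans_le (hmax hx)
  have hy₀ball : y₀ ∈ ball x R := by
    by_contra hy₀ball
    have : y₀ ∈ sphere x R := by
      rw [← closedBall_sdiff_ball]
      exact ⟨hy₀, hy₀ball⟩
    simp [hφbd y₀ this] at hs
  refine ⟨y₀, hy₀ball, φ y₀ / v y₀, hs, (div_mul_cancel₀ _ (hvpos y₀ hy₀).ne').symm,
    fun y hy => ?_⟩
  exact (div_le_iff₀ (hvpos y hy)).mp (hmax hy)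

theorem norm_gradient_le_sSup_image_ball {E : Type*} [NormedAddCommGroup E]
    [InnerProductSpace ℝ E] [FiniteDimensional ℝ E] {F : E → ℝ} (hF : ContDiff ℝ 1 F)
    {x y : E} {R : ℝ} (hy : y ∈ ball x R) :
    ‖gradient F y‖ ≤ sSup ((fun z => ‖gradient F z‖) '' ball x R) := by
  have hcont : Continuous fun z => ‖gradient F z‖ :=
    ((toDual ℝ E).symm.continuous.comp (hF.continuous_fderiv one_ne_zero)).norm
  refine le_csSup ?_ (mem_image_of_mem _ hy)
  exact ((isCompact_closedBall x R).bddAbove_image hcont.continuousOn).mono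
    (image_mono ball_subset_closedBall)

section Euclidean

variable {d : ℕ}

theorem laplacian_eq_laplacian (u : EuclideanSpace ℝ (Fin d) → ℝ)
    (y : EuclideanSpace ℝ (Fin d)) : laplacian u y = Δ u y := by
  simp [laplacian, laplacian_eq_iteratedFDeriv_orthonormalBasis u (EuclideanSpace.basisFun _ ℝ)]

theorem Lop_eq (ε : ℝ) (F u : EuclideanSpace ℝ (Fin d) → ℝ) (y : EuclideanSpace ℝ (Fin d)) :
    Lop ε F u y = -ε * Δ u y + fderiv ℝ u y (gradient F y) := by
  rw [Lop, laplacian_eq_laplacian, real_inner_comm, inner_gradient_left]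

theorem mul_Lop_le_Lop_of_isLocalMax_sub {ε s : ℝ} (hε : 0 ≤ ε)
    {F φ v : EuclideanSpace ℝ (Fin d) → ℝ} {y : EuclideanSpace ℝ (Fin d)}
    (hφ : ContDiffAt ℝ 2 φ y) (hv : ContDiffAt ℝ 2 v y)
    (hmax : IsLocalMax (φ - s • v) y) : s * Lop ε F v y ≤ Lop ε F φ y := by
  have hsv : ContDiffAt ℝ 2 (s • v) y := hv.const_smul s
  have hgrad : fderiv ℝ φ y = s • fderiv ℝ v y := by
    have := hmax.fderiv_eq_zero
    rwa [fderiv_sub (hφ.differentiableAt two_ne_zero) (hsv.differentiableAt two_ne_zero),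
      fderiv_const_smul (hv.differentiableAt two_ne_zero), sub_eq_zero] at this
  have hlap : Δ φ y ≤ s * Δ v y := by
    have := hmax.laplacian_nonpos_s6 (hφ.sub hsv)
    rwa [hφ.laplacian_sub hsv, laplacian_smul s hv, smul_eq_mul, sub_nonpos] at this
  rw [Lop_eq, Lop_eq, hgrad, smul_apply, smul_eq_mul]
  nlinarith

theorem Lop_const_sub_norm_sub_sq (ε c : ℝ) (F : EuclideanSpace ℝ (Fin d) → ℝ)
    (x y : EuclideanSpace ℝ (Fin d)) :
    Lop ε F (fun z => c - ‖z - x‖ ^ 2) y = 2 * d * ε - 2 * ⟪y - x, gradient F y⟫_ℝ := by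
  have hsq : ContDiffAt ℝ 2 (fun z : EuclideanSpace ℝ (Fin d) => ‖z - x‖ ^ 2) y :=
    ((contDiff_norm_sq ℝ).comp (contDiff_id.sub contDiff_const)).contDiffAt
  have hlap : Δ (fun z => c - ‖z - x‖ ^ 2) y = -(2 * d) := by
    rw [show (fun z => c - ‖z - x‖ ^ 2) = (fun _ => c) - fun z => ‖z - x‖ ^ 2 from rfl,
      contDiffAt_const.laplacian_sub hsq, laplacian_const, laplacian_norm_sub_sq,
      finrank_euclideanSpace_fin]
    simp
  rw [Lop_eq, hlap, fderiv_const_sub, fderiv_norm_sub_sq]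
  simp only [mul_neg, neg_mul, neg_neg, smul_apply, map_sub, neg_apply, sub_apply,
    coe_innerSL_apply, inner_gradient_right, Real.ringHom_apply, nsmul_eq_mul, Nat.cast_ofNat]
  ring

theorem eigenvalue_mul_sq_ge_of_lt {F φ : EuclideanSpace ℝ (Fin d) → ℝ}
    (hF : ContDiff ℝ 1 F) {ε : ℝ} (hε : 0 ≤ ε) {x : EuclideanSpace ℝ (Fin d)} {R : ℝ}
    (hR : 0 < R) (hdrift : 2 * R * sSup ((fun y => ‖gradient F y‖) '' ball x R) ≤ d * ε)
    {U : Set (EuclideanSpace ℝ (Fin d))} (hUopen : IsOpen U) (hU : closedBall x R ⊆ U)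
    (hφ2 : ContDiffOn ℝ 2 φ U) (hφpos : ∀ y ∈ ball x R, 0 < φ y)
    (hφbd : ∀ y ∈ sphere x R, φ y = 0) {lam : ℝ}
    (hφeq : ∀ y ∈ ball x R, Lop ε F φ y = lam * φ y) {R' : ℝ} (hRR' : R < R') :
    d * ε ≤ lam * R' ^ 2 := by
  set v : EuclideanSpace ℝ (Fin d) → ℝ := fun z => R' ^ 2 - ‖z - x‖ ^ 2
  have hv : ContDiff ℝ 2 v :=
    contDiff_const.sub ((contDiff_norm_sq ℝ).comp (contDiff_id.sub contDiff_const))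
  have hvpos : ∀ y ∈ closedBall x R, 0 < v y := fun y hy => by
    have : ‖y - x‖ ≤ R := mem_closedBall_iff_norm.mp hy
    have : ‖y - x‖ ^ 2 < R' ^ 2 := by gcongr; linarith
    simp only [v]; linarith
  obtain ⟨y₀, hy₀, s, hs, htouch, hφle⟩ := exists_mem_ball_le_mul_of_eq_zero_on_sphere hR
    (hφ2.continuousOn.mono hU) hv.continuous.continuousOn hvpos hφpos hφbd
  have hy₀' : y₀ ∈ closedBall x R := ball_subset_closedBall hy₀
  have hφy₀ : ContDiffAt ℝ 2 φ y₀ := hφ2.contDiffAt (hUopen.mem_nhds (hU hy₀'))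
  have hmax : IsLocalMax (φ - s • v) y₀ := by
    filter_upwards [isOpen_ball.mem_nhds hy₀] with y hy
    simp only [Pi.sub_apply, Pi.smul_apply, smul_eq_mul, htouch, sub_self, sub_nonpos]
    exact hφle y (ball_subset_closedBall hy)
  have hdrift_y₀ : 2 * ⟪y₀ - x, gradient F y₀⟫_ℝ ≤ d * ε :=
    calc 2 * ⟪y₀ - x, gradient F y₀⟫_ℝ ≤ 2 * (‖y₀ - x‖ * ‖gradient F y₀‖) := by
          gcongr; exact real_inner_le_norm _ _
      _ ≤ 2 * (R * sSup ((fun y => ‖gradient F y‖) '' ball x R)) := by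
          gcongr
          · exact (mem_ball_iff_norm.mp hy₀).le
          · exact norm_gradient_le_sSup_image_ball hF hy₀
      _ ≤ d * ε := by linarith
  have hLv : d * ε ≤ Lop ε F v y₀ := by
    rw [Lop_const_sub_norm_sub_sq]; linarith
  have hkey : d * ε ≤ lam * v y₀ := by
    refine le_of_mul_le_mul_left ?_ hs
    calc s * (d * ε) ≤ s * Lop ε F v y₀ := by gcongr
      _ ≤ Lop ε F φ y₀ := mul_Lop_le_Lop_of_isLocalMax_sub hε hφy₀ hv.contDiffAt hmax
      _ = s * (lam * v y₀) := by rw [hφeq y₀ hy₀, htouch]; ring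
  have hlam : 0 ≤ lam := by
    have : (0 : ℝ) ≤ d * ε := by positivity
    exact nonneg_of_mul_nonneg_left (this.trans hkey) (hvpos y₀ hy₀')
  exact hkey.trans (mul_le_mul_of_nonneg_left (sub_le_self _ (sq_nonneg _)) hlam)

end Euclidean

/-- lower bound on the principal Dirichlet eigenvalue of `L_ε` on a
small ball (bound (2.21) from the proof of Lemma 2.3). -/
theorem stmt_6 {d : ℕ} (F : EuclideanSpace ℝ (Fin d) → ℝ) (hF : ContDiff ℝ 1 F)
    (ε : ℝ) (hε : 0 < ε) (x : EuclideanSpace ℝ (Fin d)) (R : ℝ) (hR : 0 < R)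
    (hdrift : 2 * R * sSup ((fun y => ‖gradient F y‖) '' Metric.ball x R) ≤ d * ε)
    (φ : EuclideanSpace ℝ (Fin d) → ℝ)
    (U : Set (EuclideanSpace ℝ (Fin d))) (hUopen : IsOpen U)
    (hU : Metric.closedBall x R ⊆ U) (hφ2 : ContDiffOn ℝ 2 φ U)
    (hφpos : ∀ y ∈ Metric.ball x R, 0 < φ y)
    (hφbd : ∀ y ∈ Metric.sphere x R, φ y = 0)
    (lam : ℝ)
    (hφeq : ∀ y ∈ Metric.ball x R, Lop ε F φ y = lam * φ y) :
    d * ε / R ^ 2 ≤ lam ∧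
      ∀ δ : ℝ, 1 / 8 < δ → δ < 1 → R = δ * ε → d / (δ ^ 2 * ε) ≤ lam := by
  have hbound : d * ε ≤ lam * R ^ 2 := by
    have hcont : Tendsto (fun r => lam * r ^ 2) (𝓝[>] R) (𝓝 (lam * R ^ 2)) :=
      ((continuous_const.mul (continuous_pow 2)).tendsto R).mono_left nhdsWithin_le_nhds
    exact ge_of_tendsto hcont (eventually_nhdsWithin_of_forall fun R' hR' =>
      eigenvalue_mul_sq_ge_of_lt hF hε.le hR hdrift hUopen hU hφ2 hφpos hφbd hφeq hR')
  have hmain : d * ε / R ^ 2 ≤ lam := (div_le_iff₀ (by positivity)).mpr hbound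
  refine ⟨hmain, fun δ hδ _ hRδ => ?_⟩
  have hδ0 : 0 < δ := by linarith
  convert hmain using 1
  rw [hRδ]
  field_simp
end

section
/- Let d ≥ 1 and let F : ℝ^d → ℝ be continuously differentiable with locally Lipschitz gradient. Suppose there are constants c > 0 and C₁ ∈ ℝ such that |∇F(x)| ≥ c for every x ∈ ℝ^d with F(x) > C₁. Then for every α ≥ C₁ such that the sublevel set {y : F(y) ≤ α} is nonempty, and every x ∈ ℝ^d with F(x) > α, one has F(x) − α ≥ c·dist(x, {y : F(y) ≤ α}). -/
open Metric Set

/-!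
Fix `c' < c` and minimise the coercive function `φ y = max (F y) α + c' * dist y x`.
At a minimiser `z` with `F z > α`, a small step along `-∇F z` would lower `F` at rate
`‖∇F z‖ > c'` while raising the distance term at rate at most `c'`; hence `F z ≤ α`,
and `φ z ≤ φ x` is the claimed bound for `c'`. Letting `c' → c` gives the result.
-/

open Filter Topology

variable {E : Type*} [NormedAddCommGroup E] [InnerProductSpace ℝ E]

theorem HasGradientAt.frequently_add_mul_dist_lt [CompleteSpace E] {F : E → ℝ} {g z : E}
    {c : ℝ} (hF : HasGradientAt F g z) (hc₀ : 0 ≤ c) (hc : c < ‖g‖) :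
    ∃ᶠ y in 𝓝 z, F y + c * dist y z < F z := by
  have hg : 0 < ‖g‖ := hc₀.trans_lt hc
  set w : E := -(‖g‖⁻¹ • g)
  have hw : ‖w‖ = 1 := by
    rw [norm_neg, norm_smul, norm_inv, norm_norm, inv_mul_cancel₀ hg.ne']
  have hgw : inner ℝ g w = -‖g‖ := by
    rw [inner_neg_right, real_inner_smul_right, real_inner_self_eq_norm_mul_norm, ← mul_assoc,
      inv_mul_cancel₀ hg.ne', one_mul]
  have hline : HasDerivAt (fun s : ℝ => z + s • w) w 0 := by
    simpa using ((hasDerivAt_id (0 : ℝ)).smul_const w).const_add z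
  have hderiv : HasDerivAt (fun s : ℝ => F (z + s • w)) (-‖g‖) 0 := by
    rw [← hgw]
    exact hF.hasFDerivAt.comp_hasDerivAt_of_eq 0 hline (by simp)
  have hslope : ∀ᶠ s in 𝓝[>] (0 : ℝ), slope (fun s : ℝ => F (z + s • w)) 0 s < -c :=
    hderiv.hasDerivWithinAt.limsup_slope_le' self_notMem_Ioi (neg_lt_neg hc)
  have hdescent : ∀ᶠ s in 𝓝[>] (0 : ℝ), F (z + s • w) + c * dist (z + s • w) z < F z := by
    filter_upwards [hslope, self_mem_nhdsWithin] with s hs (hs₀ : 0 < s)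
    rw [slope_def_field, sub_zero, zero_smul, add_zero, div_lt_iff₀ hs₀] at hs
    rw [dist_eq_norm, add_sub_cancel_left, norm_smul, hw, Real.norm_of_nonneg hs₀.le, mul_one]
    linarith
  have hlim : Tendsto (fun s : ℝ => z + s • w) (𝓝[>] 0) (𝓝 z) := by
    simpa using hline.continuousAt.tendsto.mono_left nhdsWithin_le_nhds
  exact hlim.frequently hdescent.frequently

theorem mul_infDist_le_of_lt_norm_gradient [ProperSpace E] {F : E → ℝ}
    (hF : Differentiable ℝ F) {c α : ℝ} (hc : 0 < c)
    (hgrad : ∀ z, α < F z → c < ‖gradient F z‖) {x : E} (hx : α ≤ F x) :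
    c * infDist x {y | F y ≤ α} ≤ F x - α := by
  set φ : E → ℝ := fun y => max (F y) α + c * dist y x
  have hφ : Continuous φ := by
    have := hF.continuous
    fun_prop
  have hcoercive : ∀ᶠ y in cocompact E, φ x ≤ φ y := by
    filter_upwards [(tendsto_dist_right_cocompact_atTop x).eventually_ge_atTop ((F x - α) / c)]
      with y hy
    rw [div_le_iff₀' hc] at hy
    simp only [φ, dist_self, mul_zero, add_zero, max_eq_left hx]
    linarith [le_max_right (F y) α]
  obtain ⟨z, hz⟩ := hφ.exists_forall_le' x hcoercive
  have hzα : F z ≤ α := by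
    by_contra! hzα
    have hnear : ∀ᶠ y in 𝓝 z, α + c * dist y z < F z := by
      have : Tendsto (fun y => α + c * dist y z) (𝓝 z) (𝓝 (α + c * dist z z)) :=
        Continuous.tendsto (by fun_prop) z
      rw [dist_self, mul_zero, add_zero] at this
      exact this.eventually_lt_const hzα
    obtain ⟨y, hFy, hαy⟩ := (((hF z).hasGradientAt.frequently_add_mul_dist_lt hc.le
      (hgrad z hzα)).and_eventually hnear).exists
    have hyz : φ y < φ z :=
      calc φ y ≤ max (F y) α + c * (dist y z + dist z x) := by
            unfold φ; gcongr; exact dist_triangle y z x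
        _ = max (F y + c * dist y z) (α + c * dist y z) + c * dist z x := by
            rw [max_add_add_right]; ring
        _ < F z + c * dist z x := by gcongr; exact max_lt hFy hαy
        _ ≤ φ z := add_le_add_left (le_max_left _ _) _
    exact (hz y).not_gt hyz
  calc c * infDist x {y | F y ≤ α} ≤ c * dist z x := by
        rw [dist_comm]; exact mul_le_mul_of_nonneg_left (infDist_le_dist_of_mem hzα) hc.le
    _ = φ z - α := by simp only [φ, max_eq_right hzα]; ring
    _ ≤ φ x - α := by gcongr; exact hz x
    _ = F x - α := by simp only [φ, dist_self, mul_zero, add_zero, max_eq_left hx]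

theorem mul_infDist_le_of_le_norm_gradient [ProperSpace E] {F : E → ℝ}
    (hF : Differentiable ℝ F) {c α : ℝ} (hc : 0 < c)
    (hgrad : ∀ z, α < F z → c ≤ ‖gradient F z‖) {x : E} (hx : α ≤ F x) :
    c * infDist x {y | F y ≤ α} ≤ F x - α := by
  refine le_of_tendsto (x := 𝓝[<] c)
    ((continuous_mul_const _).tendsto c |>.mono_left nhdsWithin_le_nhds) ?_
  filter_upwards [Ioo_mem_nhdsLT hc] with c' hc'
  exact mul_infDist_le_of_lt_norm_gradient hF hc'.1
    (fun z hz => hc'.2.trans_le (hgrad z hz)) hx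

theorem stmt_10_general {d : ℕ}
    (F : EuclideanSpace ℝ (Fin d) → ℝ) (hF : ContDiff ℝ 1 F)
    (c C₁ : ℝ) (hc : 0 < c)
    (hgrad : ∀ x, C₁ < F x → c ≤ ‖gradient F x‖)
    (α : ℝ) (hα : C₁ ≤ α)
    (x : EuclideanSpace ℝ (Fin d)) (hx : α < F x) :
    c * Metric.infDist x {y | F y ≤ α} ≤ F x - α :=
  mul_infDist_le_of_le_norm_gradient (hF.differentiable one_ne_zero) hc
    (fun z hz => hgrad z (hα.trans_lt hz)) hx.le

/-- growth above level sets from the lower gradient bound. -/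
theorem stmt_10 {d : ℕ} (hd : 1 ≤ d)
    (F : EuclideanSpace ℝ (Fin d) → ℝ) (hF : ContDiff ℝ 1 F)
    (hFlip : LocallyLipschitz (gradient F))
    (c C₁ : ℝ) (hc : 0 < c)
    (hgrad : ∀ x, C₁ < F x → c ≤ ‖gradient F x‖)
    (α : ℝ) (hα : C₁ ≤ α) (hne : {y | F y ≤ α}.Nonempty)
    (x : EuclideanSpace ℝ (Fin d)) (hx : α < F x) :
    c * Metric.infDist x {y | F y ≤ α} ≤ F x - α :=
  stmt_10_general F hF c C₁ hc hgrad α hα x hx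
end

section
/- Let d ≥ 1 and let F : ℝ^d → ℝ be continuously differentiable with locally Lipschitz gradient, and suppose there are constants c > 0 and C₁ ∈ ℝ such that |∇F(x)| ≥ c whenever F(x) > C₁. Fix α ≥ C₁ such that the sublevel set {y : F(y) ≤ α} is nonempty and bounded. Then there exists a constant C > 0, depending on d, c, α and F but not on ε, such that for every ε ∈ (0, 1]: ∫_{{x : F(x) > α}} e^{−F(x)/ε} dx ≤ C·e^{−α/ε}. -/
/-!
Outside `S = {F ≤ α}` the gradient has norm at least `c`, which forces `F x ≥ α + c·dist(x, S)`:
otherwise, for some `δ < c`, a minimiser of `max F α + δ‖· - x‖` lies outside `S`, and there the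
penalty caps the slope of `F` at `δ`. Since `ε ≤ 1`, the Gibbs weight above level `α` is then at
most `e^{-α/ε} e^{-c·dist(x, S)}`, and the latter is integrable because `S` is bounded.
-/

open Metric Set

open Filter Topology MeasureTheory

theorem norm_gradient_le_of_eventually_sub_le {E : Type*} [NormedAddCommGroup E]
    [InnerProductSpace ℝ E] [CompleteSpace E] {F : E → ℝ} {y : E} {δ : ℝ} (hδ : 0 ≤ δ)
    (hF : DifferentiableAt ℝ F y) (h : ∀ᶠ z in 𝓝 y, F y - δ * ‖z - y‖ ≤ F z) :
    ‖gradient F y‖ ≤ δ := by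
  set g := gradient F y
  have hline : HasDerivAt (fun t : ℝ ↦ y + t • (-g)) (-g) 0 := by
    simpa using ((hasDerivAt_id (0 : ℝ)).smul_const (-g)).const_add y
  have hderiv : HasDerivAt (fun t : ℝ ↦ F (y + t • (-g))) (-‖g‖ ^ 2) 0 := by
    have := hF.hasGradientAt.hasFDerivAt.comp_hasDerivAt_of_eq 0 hline (by simp)
    rwa [InnerProductSpace.toDual_apply_apply, inner_neg_right, real_inner_self_eq_norm_sq] at this
  have hslope : ∀ᶠ t in 𝓝[>] (0 : ℝ), -(δ * ‖g‖) ≤ t⁻¹ * (F (y + t • (-g)) - F y) := by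
    have hnear : ∀ᶠ t in 𝓝 (0 : ℝ), F y - δ * ‖t • (-g)‖ ≤ F (y + t • (-g)) := by
      have := hline.continuousAt.tendsto.eventually (by simpa using h)
      simpa using this
    filter_upwards [nhdsWithin_le_nhds hnear, self_mem_nhdsWithin] with t ht (htpos : 0 < t)
    rw [norm_smul, Real.norm_of_nonneg htpos.le, norm_neg] at ht
    rw [le_inv_mul_iff₀ htpos]
    linarith
  have := ge_of_tendsto (by simpa using hderiv.tendsto_slope_zero_right) hslope
  nlinarith [norm_nonneg g]

theorem add_mul_infDist_le {E : Type*} [NormedAddCommGroup E] [InnerProductSpace ℝ E]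
    [ProperSpace E] {F : E → ℝ} (hF : Differentiable ℝ F) {c α : ℝ}
    (hgrad : ∀ x, α < F x → c ≤ ‖gradient F x‖) {x : E} (hx : α ≤ F x) :
    α + c * infDist x {y | F y ≤ α} ≤ F x := by
  set S := {y | F y ≤ α}
  by_contra! hlt
  have hD : 0 < infDist x S :=
    infDist_nonneg.lt_of_ne fun h ↦ by rw [← h, mul_zero, add_zero] at hlt; linarith
  obtain ⟨δ, hδlo, hδc⟩ : ∃ δ, (F x - α) / infDist x S < δ ∧ δ < c :=
    exists_between ((div_lt_iff₀ hD).2 (by linarith))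
  have hδ : 0 < δ := (div_nonneg (by linarith) hD.le).trans_lt hδlo
  have hδD : F x - α < δ * infDist x S := (div_lt_iff₀ hD).1 hδlo
  set H : E → ℝ := fun z ↦ max (F z) α + δ * dist z x
  have hHx : H x = F x := by simp [H, hx]
  have hcoercive : ∀ᶠ z in cocompact E, H x ≤ H z := by
    filter_upwards [(tendsto_dist_right_cocompact_atTop x).eventually_ge_atTop ((F x - α) / δ)]
      with z hz
    rw [div_le_iff₀' hδ] at hz
    linarith [le_max_right (F z) α]
  have hH : Continuous H := by have := hF.continuous; fun_prop
  obtain ⟨y, hy⟩ := hH.exists_forall_le' x hcoercive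
  have hFy : α < F y := by
    by_contra! hyS
    have : infDist x S ≤ dist y x := dist_comm x y ▸ infDist_le_dist_of_mem hyS
    have := hy x
    simp only [H, max_eq_right hyS] at this
    nlinarith
  have hlocal : ∀ᶠ z in 𝓝 y, F y - δ * ‖z - y‖ ≤ F z := by
    filter_upwards [(isOpen_lt continuous_const hF.continuous).mem_nhds hFy] with z (hz : α < F z)
    have := hy z
    simp only [H, max_eq_left hFy.le, max_eq_left hz.le] at this
    rw [← dist_eq_norm]
    nlinarith [dist_triangle z y x]
  have := norm_gradient_le_of_eventually_sub_le hδ.le (hF y) hlocal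
  linarith [hgrad y hFy]

theorem integrable_exp_neg_mul_norm {E : Type*} [NormedAddCommGroup E] [NormedSpace ℝ E]
    [MeasurableSpace E] [BorelSpace E] [SecondCountableTopology E] {μ : Measure E}
    [μ.HasTemperateGrowth] {c : ℝ} (hc : 0 < c) :
    Integrable (fun x ↦ Real.exp (-c * ‖x‖)) μ := by
  set N := μ.integrablePower
  have hdecay : ∀ x : E, ‖x‖ ^ (0 + N) * ‖Real.exp (-c * ‖x‖)‖ ≤ N.factorial / c ^ N := by
    intro x
    have hpow := Real.pow_div_factorial_le_exp _ (mul_nonneg hc.le (norm_nonneg x)) N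
    rw [div_le_iff₀ (by positivity)] at hpow
    rw [zero_add, Real.norm_of_nonneg (Real.exp_nonneg _), le_div_iff₀ (by positivity)]
    calc ‖x‖ ^ N * Real.exp (-c * ‖x‖) * c ^ N = (c * ‖x‖) ^ N * Real.exp (-(c * ‖x‖)) := by
          ring_nf
      _ ≤ Real.exp (c * ‖x‖) * N.factorial * Real.exp (-(c * ‖x‖)) := by gcongr
      _ = N.factorial := by
          rw [mul_right_comm, ← Real.exp_add, add_neg_cancel, Real.exp_zero, one_mul]
  have := integrable_of_le_of_pow_mul_le (k := 0) (μ := μ)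
    (fun x ↦ (by simp [Real.norm_of_nonneg (Real.exp_nonneg _)]; positivity :
      ‖Real.exp (-c * ‖x‖)‖ ≤ 1)) hdecay (by fun_prop)
  simpa [Real.norm_of_nonneg (Real.exp_nonneg _)] using this

theorem integrable_exp_neg_mul_infDist {E : Type*} [NormedAddCommGroup E] [NormedSpace ℝ E]
    [MeasurableSpace E] [BorelSpace E] [SecondCountableTopology E] {μ : Measure E}
    [μ.HasTemperateGrowth] [μ.IsAddRightInvariant] {s : Set E} (hs : Bornology.IsBounded s)
    (hne : s.Nonempty) {c : ℝ} (hc : 0 < c) :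
    Integrable (fun x ↦ Real.exp (-c * infDist x s)) μ := by
  obtain ⟨y, hy⟩ := hne
  refine (((integrable_exp_neg_mul_norm hc).comp_sub_right y).const_mul
    (Real.exp (c * diam s))).mono' (by fun_prop) (ae_of_all _ fun x ↦ ?_)
  rw [Real.norm_of_nonneg (Real.exp_nonneg _), ← Real.exp_add, Real.exp_le_exp, ← dist_eq_norm]
  nlinarith [dist_le_infDist_add_diam (x := x) hs hy]

theorem exp_neg_div_le_mul_exp_neg_sub {ε α t : ℝ} (hε : 0 < ε) (hε1 : ε ≤ 1) (hαt : α ≤ t) :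
    Real.exp (-t / ε) ≤ Real.exp (-α / ε) * Real.exp (-(t - α)) := by
  rw [← Real.exp_add, Real.exp_le_exp]
  have := le_div_self (sub_nonneg.2 hαt) hε hε1
  rw [sub_div] at this
  linarith [neg_div ε t, neg_div ε α]

theorem stmt_11_general {d : ℕ}
    (F : EuclideanSpace ℝ (Fin d) → ℝ) (hF : ContDiff ℝ 1 F)
    (c C₁ : ℝ) (hc : 0 < c)
    (hgrad : ∀ x, C₁ < F x → c ≤ ‖gradient F x‖)
    (α : ℝ) (hα : C₁ ≤ α) (hne : {y | F y ≤ α}.Nonempty)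
    (hbdd : Bornology.IsBounded {y | F y ≤ α}) :
    ∃ C > 0, ∀ ε : ℝ, 0 < ε → ε ≤ 1 →
      ∫ x in {x | α < F x}, Real.exp (-F x / ε) ≤ C * Real.exp (-α / ε) := by
  set S := {y | F y ≤ α}
  have hgradS : ∀ x, α < F x → c ≤ ‖gradient F x‖ := fun x hx ↦ hgrad x (hα.trans_lt hx)
  have hint := integrable_exp_neg_mul_infDist (μ := volume) hbdd hne hc
  refine ⟨∫ x, Real.exp (-c * infDist x S), integral_exp_pos hint, fun ε hε hε1 ↦ ?_⟩
  have hpt : ∀ x ∈ {x | α < F x},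
      Real.exp (-F x / ε) ≤ Real.exp (-α / ε) * Real.exp (-c * infDist x S) := by
    intro x (hx : α < F x)
    have hdist := add_mul_infDist_le (hF.differentiable one_ne_zero) hgradS hx.le
    calc Real.exp (-F x / ε) ≤ Real.exp (-α / ε) * Real.exp (-(F x - α)) :=
          exp_neg_div_le_mul_exp_neg_sub hε hε1 hx.le
      _ ≤ Real.exp (-α / ε) * Real.exp (-c * infDist x S) := by gcongr; linarith
  calc ∫ x in {x | α < F x}, Real.exp (-F x / ε)
      ≤ ∫ x in {x | α < F x}, Real.exp (-α / ε) * Real.exp (-c * infDist x S) :=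
        integral_mono_of_nonneg (ae_of_all _ fun _ ↦ (Real.exp_pos _).le)
          (hint.const_mul _).integrableOn
          ((ae_restrict_iff' (isOpen_lt continuous_const hF.continuous).measurableSet).2
            (ae_of_all _ hpt))
    _ ≤ ∫ x, Real.exp (-α / ε) * Real.exp (-c * infDist x S) :=
        setIntegral_le_integral (hint.const_mul _) (ae_of_all _ fun _ ↦ by positivity)
    _ = (∫ x, Real.exp (-c * infDist x S)) * Real.exp (-α / ε) := by
        rw [integral_const_mul, mul_comm]

/-- exponentially tight level sets: the Gibbs weight above level `α`
is at most `C·e^{−α/ε}` uniformly in `ε ∈ (0,1]`. -/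
theorem stmt_11 {d : ℕ} (hd : 1 ≤ d)
    (F : EuclideanSpace ℝ (Fin d) → ℝ) (hF : ContDiff ℝ 1 F)
    (hFlip : LocallyLipschitz (gradient F))
    (c C₁ : ℝ) (hc : 0 < c)
    (hgrad : ∀ x, C₁ < F x → c ≤ ‖gradient F x‖)
    (α : ℝ) (hα : C₁ ≤ α) (hne : {y | F y ≤ α}.Nonempty)
    (hbdd : Bornology.IsBounded {y | F y ≤ α}) :
    ∃ C > 0, ∀ ε : ℝ, 0 < ε → ε ≤ 1 →
      ∫ x in {x | α < F x}, Real.exp (-F x / ε) ≤ C * Real.exp (-α / ε) :=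
  stmt_11_general F hF c C₁ hc hgrad α hα hne hbdd
end
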